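/- arXiv:1410.0843 — 3 statements merged into one kernel-verified Lean document; each statement's English description precedes it below -/
import Mathlib

section
/- Let N be a positive integer, s ∈ (0,2) a real number with s < N, 2*_s = 2N/(N−s), p ∈ (2, 2*_s), and γ = (ps − N(p−2))/(2s). Let V, K : ℝ^N → ℝ be continuous with V(x) > 0 and K(x) > 0 for all x, and suppose lim_{|x|→∞} K(x)/V(x)^γ = 0. Then for every ε > 0 there exists r > 0 such that for all x ∈ ℝ^N with |x| ≥ r and all t ∈ ℝ one has K(x)|t|^p ≤ ε (V(x) t² + |t|^{2*_s}). -/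
/-!
Write `γ = (ps − N(p−2))/(2s)` and `2*_s = 2N/(N−s)`. The assumptions on `p` are exactly
`0 < γ < 1`, and `p = 2γ + 2*_s (1 − γ)`, so `V^γ |t|^p = (V t²)^γ (|t|^{2*_s})^{1−γ}`, which the
weighted AM–GM inequality bounds by `V t² + |t|^{2*_s}`. Far out, `K < ε V^γ`, which gives the claim.
-/

open Filter

lemma exists_pos_forall_le_norm_of_eventually_cocompact {E : Type*} [SeminormedAddCommGroup E]
    {P : E → Prop} (h : ∀ᶠ x in cocompact E, P x) : ∃ r > 0, ∀ x : E, r ≤ ‖x‖ → P x := by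
  obtain ⟨r, -, hr⟩ := hasBasis_cobounded_norm.eventually_iff.mp (Metric.cobounded_le_cocompact h)
  exact ⟨max r 1, by positivity, fun x hx ↦ hr (le_of_max_le_left hx)⟩

lemma Real.rpow_mul_rpow_one_sub_le_add {a b γ : ℝ} (ha : 0 ≤ a) (hb : 0 ≤ b) (hγ0 : 0 ≤ γ)
    (hγ1 : γ ≤ 1) : a ^ γ * b ^ (1 - γ) ≤ a + b := by
  have hamgm : a ^ γ * b ^ (1 - γ) ≤ γ * a + (1 - γ) * b :=
    Real.geom_mean_le_arith_mean2_weighted hγ0 (by linarith) ha hb (by ring)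
  nlinarith

lemma rpow_interpolation_le {V t γ p q : ℝ} (hV : 0 ≤ V) (hγ0 : 0 ≤ γ) (hγ1 : γ ≤ 1)
    (hp : p ≠ 0) (hpq : 2 * γ + q * (1 - γ) = p) :
    V ^ γ * |t| ^ p ≤ V * t ^ 2 + |t| ^ q := by
  have hsplit : V ^ γ * |t| ^ p = (V * t ^ 2) ^ γ * (|t| ^ q) ^ (1 - γ) := by
    rw [Real.mul_rpow hV (sq_nonneg t), ← sq_abs, ← Real.rpow_two, ← Real.rpow_mul (abs_nonneg t),
      ← Real.rpow_mul (abs_nonneg t), mul_assoc, ← Real.rpow_add' (abs_nonneg t) (hpq ▸ hp), hpq]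
  rw [hsplit]
  exact Real.rpow_mul_rpow_one_sub_le_add (by positivity) (by positivity) hγ0 hγ1

section FractionalExponent

variable {N s p : ℝ}

lemma fractionalExponent_pos (hs0 : 0 < s) (hsN : s < N) (hpc : p < 2 * N / (N - s)) :
    0 < (p * s - N * (p - 2)) / (2 * s) := by
  have hpq : p * (N - s) < 2 * N := (lt_div_iff₀ (by linarith)).mp hpc
  exact div_pos (by linarith) (by linarith)

lemma fractionalExponent_lt_one (hs0 : 0 < s) (hsN : s < N) (hp2 : 2 < p) :
    (p * s - N * (p - 2)) / (2 * s) < 1 := by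
  rw [div_lt_one (by linarith)]
  nlinarith

lemma two_mul_fractionalExponent_add_critical (hs0 : 0 < s) (hsN : s < N) :
    2 * ((p * s - N * (p - 2)) / (2 * s)) + 2 * N / (N - s) * (1 - (p * s - N * (p - 2)) / (2 * s))
      = p := by
  have hNs : N - s ≠ 0 := by linarith
  field_simp
  ring

end FractionalExponent

theorem stmt_1_general (N : ℕ) (s : ℝ) (hs0 : 0 < s)
    (hsN : s < (N : ℝ)) (p : ℝ) (hp2 : 2 < p) (hpc : p < 2 * N / (N - s))
    (V K : EuclideanSpace ℝ (Fin N) → ℝ)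
    (hVpos : ∀ x, 0 < V x)
    (hlim : Tendsto (fun x => K x / (V x) ^ ((p * s - N * (p - 2)) / (2 * s)))
      (cocompact (EuclideanSpace ℝ (Fin N))) (nhds 0)) :
    ∀ ε > (0 : ℝ), ∃ r > (0 : ℝ), ∀ x : EuclideanSpace ℝ (Fin N), r ≤ ‖x‖ →
      ∀ t : ℝ, K x * |t| ^ p ≤ ε * (V x * t ^ 2 + |t| ^ (2 * N / (N - s))) := by
  intro ε hε
  set γ := (p * s - N * (p - 2)) / (2 * s)
  obtain ⟨r, hr, hKV⟩ :=
    exists_pos_forall_le_norm_of_eventually_cocompact (hlim.eventually (gt_mem_nhds hε))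
  refine ⟨r, hr, fun x hx t ↦ ?_⟩
  have hKx : K x ≤ ε * V x ^ γ :=
    ((div_lt_iff₀ (Real.rpow_pos_of_pos (hVpos x) γ)).mp (hKV x hx)).le
  calc K x * |t| ^ p ≤ ε * (V x ^ γ * |t| ^ p) := by
        rw [← mul_assoc]; exact mul_le_mul_of_nonneg_right hKx (by positivity)
    _ ≤ ε * (V x * t ^ 2 + |t| ^ (2 * N / (N - s))) :=
        mul_le_mul_of_nonneg_left (rpow_interpolation_le (hVpos x).le
          (fractionalExponent_pos hs0 hsN hpc).le (fractionalExponent_lt_one hs0 hsN hp2).le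
          (by linarith) (two_mul_fractionalExponent_add_critical hs0 hsN)) hε.le

/-- If `V, K > 0` are continuous and `K(x)/V(x)^γ → 0` as `|x| → ∞`, with
`γ = (ps − N(p−2))/(2s)`, then for every `ε > 0` there is `r > 0` such that
`K(x)|t|^p ≤ ε (V(x) t² + |t|^{2*_s})` for all `|x| ≥ r` and all `t ∈ ℝ`. -/
theorem stmt_1 (N : ℕ) (hN : 0 < N) (s : ℝ) (hs0 : 0 < s) (hs2 : s < 2)
    (hsN : s < (N : ℝ)) (p : ℝ) (hp2 : 2 < p) (hpc : p < 2 * N / (N - s))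
    (V K : EuclideanSpace ℝ (Fin N) → ℝ)
    (hVcont : Continuous V) (hKcont : Continuous K)
    (hVpos : ∀ x, 0 < V x) (hKpos : ∀ x, 0 < K x)
    (hlim : Tendsto (fun x => K x / (V x) ^ ((p * s - N * (p - 2)) / (2 * s)))
      (cocompact (EuclideanSpace ℝ (Fin N))) (nhds 0)) :
    ∀ ε > (0 : ℝ), ∃ r > (0 : ℝ), ∀ x : EuclideanSpace ℝ (Fin N), r ≤ ‖x‖ →
      ∀ t : ℝ, K x * |t| ^ p ≤ ε * (V x * t ^ 2 + |t| ^ (2 * N / (N - s))) :=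
  stmt_1_general N s hs0 hsN p hp2 hpc V K hVpos hlim
end

section
/- Let N be a positive integer, s ∈ (0,2) a real number with s < N, 2*_s = 2N/(N−s), and q ∈ (2, 2*_s). Let V, K : ℝ^N → ℝ be continuous with V(x) > 0 and K(x) > 0 for all x, and suppose both K and K/V are bounded on ℝ^N. Then for every ε > 0 there exist real numbers 0 < s₀ < s₁ and a constant C_ε > 0 such that for all x ∈ ℝ^N and all t ∈ ℝ: K(x)|t|^q ≤ ε (V(x) t² + |t|^{2*_s}) + C_ε K(x) χ_{[s₀,s₁]}(|t|) |t|^{2*_s}, where χ_{[s₀,s₁]} denotes the characteristic function of the interval [s₀, s₁]. -/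
/-!
Split according to the size of `r = |t|`, with `2 < q < p := 2*_s`. For small `r` one has
`r ^ q ≤ s₀ ^ (q - 2) r ²` and `K ≤ B V`, so the quadratic term absorbs `K r ^ q` once
`B s₀ ^ (q - 2) ≤ ε`; for large `r` one has `r ^ q ≤ s₁ ^ (q - p) r ^ p` and `K ≤ A`, so the critical
term absorbs it once `A s₁ ^ (q - p) ≤ ε`. On the compact range `[s₀, s₁]` the crude bound
`r ^ q ≤ (s₁ ^ q / s₀ ^ p) r ^ p` suffices.
-/

open Filter Set Topology

namespace Real

lemma rpow_le_rpow_sub_two_mul_sq {q r s₀ : ℝ} (hq : 2 ≤ q) (hr : 0 ≤ r) (hrs : r ≤ s₀) :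
    r ^ q ≤ s₀ ^ (q - 2) * r ^ 2 := by
  calc r ^ q = r ^ (q - 2) * r ^ (2 : ℝ) := by
        rw [← rpow_add' hr (by linarith)]; ring_nf
    _ ≤ s₀ ^ (q - 2) * r ^ 2 := by
        rw [rpow_two]
        exact mul_le_mul_of_nonneg_right (rpow_le_rpow hr hrs (by linarith)) (sq_nonneg r)

lemma rpow_le_rpow_sub_mul_rpow {p q r s₁ : ℝ} (hqp : q ≤ p) (hs₁ : 0 < s₁) (hsr : s₁ ≤ r) :
    r ^ q ≤ s₁ ^ (q - p) * r ^ p := by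
  calc r ^ q = r ^ (q - p) * r ^ p := by
        rw [← rpow_add (hs₁.trans_le hsr)]; ring_nf
    _ ≤ s₁ ^ (q - p) * r ^ p :=
        mul_le_mul_of_nonneg_right (rpow_le_rpow_of_nonpos hs₁ hsr (by linarith))
          (rpow_nonneg (hs₁.le.trans hsr) p)

lemma rpow_le_div_mul_rpow_of_mem_Icc {p q r s₀ s₁ : ℝ} (hp : 0 ≤ p) (hq : 0 ≤ q) (hs₀ : 0 < s₀)
    (hr : r ∈ Icc s₀ s₁) : r ^ q ≤ s₁ ^ q / s₀ ^ p * r ^ p := by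
  have hs₀p : 0 < s₀ ^ p := rpow_pos_of_pos hs₀ p
  calc r ^ q ≤ s₁ ^ q := rpow_le_rpow (hs₀.le.trans hr.1) hr.2 hq
    _ = s₁ ^ q / s₀ ^ p * s₀ ^ p := (div_mul_cancel₀ _ hs₀p.ne').symm
    _ ≤ s₁ ^ q / s₀ ^ p * r ^ p :=
        mul_le_mul_of_nonneg_left (rpow_le_rpow hs₀.le hr.1 hp)
          (div_nonneg (rpow_nonneg (hs₀.le.trans (hr.1.trans hr.2)) q) hs₀p.le)

lemma exists_pos_mul_rpow_le {γ ε : ℝ} (hγ : 0 < γ) (hε : 0 < ε) (b : ℝ) :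
    ∃ s₀, 0 < s₀ ∧ b * s₀ ^ γ ≤ ε := by
  have hlim : Tendsto (fun r : ℝ => b * r ^ γ) (𝓝[>] 0) (𝓝 0) := by
    have := ((continuousAt_rpow_const 0 γ (Or.inr hγ.le)).tendsto.const_mul b).mono_left
      (nhdsWithin_le_nhds (s := Ioi 0))
    rwa [zero_rpow hγ.ne', mul_zero] at this
  exact ((eventually_mem_nhdsWithin (s := Ioi (0 : ℝ))).and (hlim.eventually (ge_mem_nhds hε))).exists

lemma exists_gt_mul_rpow_neg_le {γ ε : ℝ} (hγ : 0 < γ) (hε : 0 < ε) (a s₀ : ℝ) :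
    ∃ s₁, s₀ < s₁ ∧ a * s₁ ^ (-γ) ≤ ε := by
  have hlim : Tendsto (fun r : ℝ => a * r ^ (-γ)) atTop (𝓝 0) := by
    simpa using (tendsto_rpow_neg_atTop hγ).const_mul a
  exact ((eventually_gt_atTop s₀).and (hlim.eventually (ge_mem_nhds hε))).exists

end Real

open Real

lemma exists_rpow_le_sq_add_rpow_add_indicator {p q : ℝ} (hq : 2 < q) (hqp : q < p)
    (a b : ℝ) {ε : ℝ} (hε : 0 < ε) :
    ∃ s₀ s₁ C : ℝ, 0 < s₀ ∧ s₀ < s₁ ∧ 0 < C ∧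
      ∀ k v r : ℝ, 0 ≤ k → 0 ≤ v → k ≤ a → k ≤ b * v → 0 ≤ r →
        k * r ^ q ≤ ε * (v * r ^ 2 + r ^ p) +
          C * k * indicator (Icc s₀ s₁) (fun _ => (1 : ℝ)) r * r ^ p := by
  obtain ⟨s₀, hs₀, hbs₀⟩ := exists_pos_mul_rpow_le (γ := q - 2) (by linarith) hε b
  obtain ⟨s₁, hs₀₁, has₁⟩ := exists_gt_mul_rpow_neg_le (γ := p - q) (by linarith) hε a s₀
  have hs₁ : 0 < s₁ := hs₀.trans hs₀₁
  refine ⟨s₀, s₁, s₁ ^ q / s₀ ^ p, hs₀, hs₀₁, by positivity, fun k v r hk hv hka hkb hr ↦ ?_⟩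
  have hrp : 0 ≤ r ^ p := rpow_nonneg hr p
  have hvr : 0 ≤ v * r ^ 2 := by positivity
  have hind : 0 ≤ s₁ ^ q / s₀ ^ p * k * indicator (Icc s₀ s₁) (fun _ => (1 : ℝ)) r * r ^ p :=
    mul_nonneg (mul_nonneg (by positivity) (indicator_nonneg (fun _ _ ↦ zero_le_one) r)) hrp
  rcases le_or_gt r s₀ with hrs₀ | hs₀r
  · have : k * r ^ q ≤ ε * (v * r ^ 2) :=
      calc k * r ^ q ≤ b * v * (s₀ ^ (q - 2) * r ^ 2) :=
            mul_le_mul hkb (rpow_le_rpow_sub_two_mul_sq hq.le hr hrs₀) (rpow_nonneg hr q)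
              (hk.trans hkb)
        _ = b * s₀ ^ (q - 2) * (v * r ^ 2) := by ring
        _ ≤ ε * (v * r ^ 2) := mul_le_mul_of_nonneg_right hbs₀ hvr
    nlinarith
  rcases le_or_gt s₁ r with hs₁r | hrs₁
  · have : k * r ^ q ≤ ε * r ^ p :=
      calc k * r ^ q ≤ a * (s₁ ^ (q - p) * r ^ p) :=
            mul_le_mul hka (rpow_le_rpow_sub_mul_rpow hqp.le hs₁ hs₁r) (rpow_nonneg hr q)
              (hk.trans hka)
        _ = a * s₁ ^ (-(p - q)) * r ^ p := by ring_nf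
        _ ≤ ε * r ^ p := mul_le_mul_of_nonneg_right has₁ hrp
    nlinarith
  · have hmem : r ∈ Icc s₀ s₁ := ⟨hs₀r.le, hrs₁.le⟩
    have := mul_le_mul_of_nonneg_left
      (rpow_le_div_mul_rpow_of_mem_Icc (p := p) (q := q) (by linarith) (by linarith) hs₀ hmem) hk
    rw [indicator_of_mem hmem]
    nlinarith

theorem stmt_2_general (N : ℕ) (s : ℝ)
    (q : ℝ) (hq2 : 2 < q) (hqc : q < 2 * N / (N - s))
    (V K : EuclideanSpace ℝ (Fin N) → ℝ)
    (hVpos : ∀ x, 0 < V x) (hKpos : ∀ x, 0 < K x)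
    (hKbdd : ∃ C : ℝ, ∀ x, K x ≤ C)
    (hKVbdd : ∃ C : ℝ, ∀ x, K x / V x ≤ C) :
    ∀ ε > (0 : ℝ), ∃ s₀ s₁ Cε : ℝ, 0 < s₀ ∧ s₀ < s₁ ∧ 0 < Cε ∧
      ∀ x : EuclideanSpace ℝ (Fin N), ∀ t : ℝ,
        K x * |t| ^ q ≤ ε * (V x * t ^ 2 + |t| ^ (2 * N / (N - s))) +
          Cε * K x * Set.indicator (Set.Icc s₀ s₁) (fun _ => (1 : ℝ)) |t| *
            |t| ^ (2 * N / (N - s)) := by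
  intro ε hε
  obtain ⟨A, hA⟩ := hKbdd
  obtain ⟨B, hB⟩ := hKVbdd
  obtain ⟨s₀, s₁, C, hs₀, hs₀₁, hC, hbound⟩ :=
    exists_rpow_le_sq_add_rpow_add_indicator hq2 hqc A B hε
  refine ⟨s₀, s₁, C, hs₀, hs₀₁, hC, fun x t ↦ ?_⟩
  have hKB : K x ≤ B * V x := (div_le_iff₀ (hVpos x)).mp (hB x)
  simpa only [sq_abs] using
    hbound (K x) (V x) |t| (hKpos x).le (hVpos x).le (hA x) hKB (abs_nonneg t)

/-- If `V, K > 0` are continuous, with `K` and `K/V` bounded, then for every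
`q ∈ (2, 2*_s)` and every `ε > 0` there are `0 < s₀ < s₁` and `C_ε > 0` with
`K(x)|t|^q ≤ ε (V(x)t² + |t|^{2*_s}) + C_ε K(x) χ_{[s₀,s₁]}(|t|) |t|^{2*_s}`. -/
theorem stmt_2 (N : ℕ) (hN : 0 < N) (s : ℝ) (hs0 : 0 < s) (hs2 : s < 2)
    (hsN : s < (N : ℝ)) (q : ℝ) (hq2 : 2 < q) (hqc : q < 2 * N / (N - s))
    (V K : EuclideanSpace ℝ (Fin N) → ℝ)
    (hVcont : Continuous V) (hKcont : Continuous K)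
    (hVpos : ∀ x, 0 < V x) (hKpos : ∀ x, 0 < K x)
    (hKbdd : ∃ C : ℝ, ∀ x, K x ≤ C)
    (hKVbdd : ∃ C : ℝ, ∀ x, K x / V x ≤ C) :
    ∀ ε > (0 : ℝ), ∃ s₀ s₁ Cε : ℝ, 0 < s₀ ∧ s₀ < s₁ ∧ 0 < Cε ∧
      ∀ x : EuclideanSpace ℝ (Fin N), ∀ t : ℝ,
        K x * |t| ^ q ≤ ε * (V x * t ^ 2 + |t| ^ (2 * N / (N - s))) +
          Cε * K x * Set.indicator (Set.Icc s₀ s₁) (fun _ => (1 : ℝ)) |t| *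
            |t| ^ (2 * N / (N - s)) :=
  stmt_2_general N s q hq2 hqc V K hVpos hKpos hKbdd hKVbdd
end

section
/- Let N be a positive integer, s ∈ (0,2) a real number with s < N, 2*_s = 2N/(N−s), and q ∈ (2, 2*_s). Let V, K : ℝ^N → ℝ be continuous with V(x) > 0 and K(x) > 0 for all x, and suppose both K and K/V are bounded on ℝ^N. Let f : ℝ → [0,∞) be continuous with f(t) = 0 for t ≤ 0, lim_{t→0⁺} f(t)/t = 0, and lim_{t→+∞} f(t)/t^{2*_s − 1} = 0. Then for every ε > 0 there exist real numbers 0 < s₀ < s₁ and a constant C_ε > 0 such that for all x ∈ ℝ^N and all t ≥ 0: K(x) f(t) t ≤ ε (V(x) t² + t^{2*_s}) + C_ε K(x) χ_{[s₀,s₁]}(t) t^q, where χ_{[s₀,s₁]} denotes the characteristic function of the interval [s₀, s₁]. -/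
/-!
Take `a, b > 0` with `K ≤ a V` and `K ≤ b`, and split `[0, ∞)` into three ranges. Near `0`,
`f(t) t ≤ (ε / a) t²`, and `K ≤ a V` turns this into `K f(t) t ≤ ε V t²`; near `∞`,
`f(t) t ≤ (ε / b) t^{2*_s}`, and `K ≤ b` gives `K f(t) t ≤ ε t^{2*_s}`. The middle range
`[s₀, s₁]` is compact and avoids `0`, so there `f(t) t / t^q` is bounded by continuity.
-/

open Filter Set Topology Real

theorem exists_pos_forall_le {ι : Type*} {g : ι → ℝ} (h : ∃ C, ∀ x, g x ≤ C) :
    ∃ C > 0, ∀ x, g x ≤ C :=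
  let ⟨C, hC⟩ := h
  ⟨max C 1, by positivity, fun x => (hC x).trans (le_max_left C 1)⟩

section

variable {f : ℝ → ℝ}

theorem exists_forall_Ico_mul_le_sq_of_tendsto_div
    (hf : Tendsto (fun t => f t / t) (𝓝[>] 0) (𝓝 0)) {η : ℝ} (hη : 0 < η) :
    ∃ δ > 0, ∀ t ∈ Ico 0 δ, f t * t ≤ η * t ^ 2 := by
  obtain ⟨δ, hδ, hsub⟩ :=
    mem_nhdsGT_iff_exists_Ioo_subset.mp (hf.eventually (gt_mem_nhds hη))
  refine ⟨δ, hδ, fun t ht => ?_⟩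
  rcases ht.1.eq_or_lt with rfl | htpos
  · simp
  have hlt : f t < η * t := (div_lt_iff₀ htpos).mp (hsub ⟨htpos, ht.2⟩)
  calc f t * t ≤ η * t * t := mul_le_mul_of_nonneg_right hlt.le htpos.le
    _ = η * t ^ 2 := by ring

theorem exists_forall_ge_mul_le_rpow_of_tendsto_div_rpow {p : ℝ}
    (hf : Tendsto (fun t => f t / t ^ (p - 1)) atTop (𝓝 0)) {η : ℝ} (hη : 0 < η) :
    ∃ M, ∀ t ≥ M, f t * t ≤ η * t ^ p := by
  obtain ⟨M, hM⟩ := eventually_atTop.mp (hf.eventually (gt_mem_nhds hη))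
  refine ⟨max M 1, fun t ht => ?_⟩
  have htpos : 0 < t := zero_lt_one.trans_le ((le_max_right M 1).trans ht)
  have hlt : f t < η * t ^ (p - 1) :=
    (div_lt_iff₀ (rpow_pos_of_pos htpos _)).mp (hM t (le_of_max_le_left ht))
  calc f t * t ≤ η * t ^ (p - 1) * t := mul_le_mul_of_nonneg_right hlt.le htpos.le
    _ = η * t ^ p := by rw [mul_assoc, rpow_sub_one htpos.ne', div_mul_cancel₀ _ htpos.ne']

theorem exists_forall_Icc_mul_le_rpow (hf : Continuous f) {s₀ s₁ : ℝ} (hs₀ : 0 < s₀)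
    (q : ℝ) :
    ∃ C > 0, ∀ t ∈ Icc s₀ s₁, f t * t ≤ C * t ^ q := by
  have hpos : ∀ t ∈ Icc s₀ s₁, 0 < t := fun t ht => hs₀.trans_le ht.1
  have hcont : ContinuousOn (fun t => f t * t / t ^ q) (Icc s₀ s₁) :=
    (by fun_prop : ContinuousOn (fun t => f t * t) _).div
      (continuousOn_id.rpow_const fun t ht => Or.inl (hpos t ht).ne')
      fun t ht => (rpow_pos_of_pos (hpos t ht) q).ne'
  obtain ⟨B, hB⟩ := isCompact_Icc.exists_bound_of_continuousOn hcont
  refine ⟨max B 1, by positivity, fun t ht => ?_⟩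
  have hbound : f t * t / t ^ q ≤ max B 1 :=
    (le_abs_self _).trans ((hB t ht).trans (le_max_left B 1))
  calc f t * t = f t * t / t ^ q * t ^ q :=
        (div_mul_cancel₀ _ (rpow_pos_of_pos (hpos t ht) q).ne').symm
    _ ≤ max B 1 * t ^ q :=
        mul_le_mul_of_nonneg_right hbound (rpow_nonneg (hpos t ht).le q)

theorem exists_mul_mul_le_add_indicator_mul_rpow (hfcont : Continuous f)
    (hfnonneg : ∀ t, 0 ≤ f t) (hf0 : Tendsto (fun t => f t / t) (𝓝[>] 0) (𝓝 0)) {p : ℝ}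
    (hfinfty : Tendsto (fun t => f t / t ^ (p - 1)) atTop (𝓝 0)) (q : ℝ)
    {a b ε : ℝ} (ha : 0 < a) (hb : 0 < b) (hε : 0 < ε) :
    ∃ s₀ s₁ C : ℝ, 0 < s₀ ∧ s₀ < s₁ ∧ 0 < C ∧
      ∀ k v t : ℝ, 0 ≤ k → k ≤ a * v → k ≤ b → 0 ≤ t →
        k * f t * t ≤ ε * (v * t ^ 2 + t ^ p) +
          C * k * Set.indicator (Set.Icc s₀ s₁) (fun _ => (1 : ℝ)) t * t ^ q := by
  obtain ⟨δ, hδ, hsmall⟩ := exists_forall_Ico_mul_le_sq_of_tendsto_div hf0 (div_pos hε ha)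
  obtain ⟨M, hlarge⟩ :=
    exists_forall_ge_mul_le_rpow_of_tendsto_div_rpow hfinfty (div_pos hε hb)
  set s₁ := max M (δ / 2) + 1
  obtain ⟨C, hC, hmid⟩ := exists_forall_Icc_mul_le_rpow hfcont (half_pos hδ) (s₁ := s₁) q
  refine ⟨δ / 2, s₁, C, half_pos hδ, by linarith [le_max_right M (δ / 2)], hC,
    fun k v t hk hkv hkb ht => ?_⟩
  have hv : 0 ≤ v := nonneg_of_mul_nonneg_right (hk.trans hkv) ha
  have hF : 0 ≤ f t * t := mul_nonneg (hfnonneg t) ht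
  have hsq : 0 ≤ ε * (v * t ^ 2) := by positivity
  have hpow : 0 ≤ ε * t ^ p := mul_nonneg hε.le (rpow_nonneg ht p)
  have hind : 0 ≤ Set.indicator (Set.Icc (δ / 2) s₁) (fun _ => (1 : ℝ)) t :=
    indicator_nonneg (fun _ _ => zero_le_one) t
  have hmid_nonneg :
      0 ≤ C * k * Set.indicator (Set.Icc (δ / 2) s₁) (fun _ => (1 : ℝ)) t * t ^ q :=
    mul_nonneg (by positivity) (rpow_nonneg ht q)
  rw [mul_assoc k, mul_add]
  rcases lt_or_ge t (δ / 2) with hts | hts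
  · calc k * (f t * t) ≤ a * v * (ε / a * t ^ 2) :=
          mul_le_mul hkv (hsmall t ⟨ht, by linarith⟩) hF (by positivity)
      _ = ε * (v * t ^ 2) := by field_simp
      _ ≤ _ := by linarith
  rcases le_or_gt t s₁ with hts' | hts'
  · rw [indicator_of_mem (show t ∈ Icc (δ / 2) s₁ from ⟨hts, hts'⟩), mul_one]
    calc k * (f t * t) ≤ k * (C * t ^ q) := mul_le_mul_of_nonneg_left (hmid t ⟨hts, hts'⟩) hk
      _ = C * k * t ^ q := by ring
      _ ≤ _ := by linarith
  · calc k * (f t * t) ≤ b * (ε / b * t ^ p) :=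
          mul_le_mul hkb (hlarge t (by linarith [le_max_left M (δ / 2)])) hF hb.le
      _ = ε * t ^ p := by field_simp
      _ ≤ _ := by linarith

end

theorem stmt_3_general (N : ℕ) (s : ℝ) (q : ℝ)
    (V K : EuclideanSpace ℝ (Fin N) → ℝ)
    (hVpos : ∀ x, 0 < V x) (hKpos : ∀ x, 0 < K x)
    (hKbdd : ∃ C : ℝ, ∀ x, K x ≤ C)
    (hKVbdd : ∃ C : ℝ, ∀ x, K x / V x ≤ C)
    (f : ℝ → ℝ) (hfcont : Continuous f) (hfnonneg : ∀ t, 0 ≤ f t)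
    (hf0 : Tendsto (fun t => f t / t) (nhdsWithin 0 (Set.Ioi 0)) (nhds 0))
    (hfinfty : Tendsto (fun t => f t / t ^ (2 * N / (N - s) - 1)) atTop (nhds 0)) :
    ∀ ε > (0 : ℝ), ∃ s₀ s₁ Cε : ℝ, 0 < s₀ ∧ s₀ < s₁ ∧ 0 < Cε ∧
      ∀ x : EuclideanSpace ℝ (Fin N), ∀ t : ℝ, 0 ≤ t →
        K x * f t * t ≤ ε * (V x * t ^ 2 + t ^ (2 * N / (N - s))) +
          Cε * K x * Set.indicator (Set.Icc s₀ s₁) (fun _ => (1 : ℝ)) t * t ^ q := by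
  intro ε hε
  obtain ⟨a, ha, hKV⟩ := exists_pos_forall_le hKVbdd
  obtain ⟨b, hb, hK⟩ := exists_pos_forall_le hKbdd
  obtain ⟨s₀, s₁, C, hs₀, hs₀₁, hC, hsplit⟩ :=
    exists_mul_mul_le_add_indicator_mul_rpow hfcont hfnonneg hf0 hfinfty q ha hb hε
  exact ⟨s₀, s₁, C, hs₀, hs₀₁, hC, fun x t ht =>
    hsplit _ _ t (hKpos x).le ((div_le_iff₀ (hVpos x)).mp (hKV x)) (hK x) ht⟩

/-- If `V, K > 0` are continuous with `K` and `K/V` bounded, and `f ≥ 0` is continuous,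
vanishes on `ℝ⁻`, with `f(t)/t → 0` as `t → 0⁺` and `f(t)/t^{2*_s−1} → 0` as `t → +∞`,
then for every `q ∈ (2, 2*_s)` and `ε > 0` there are `0 < s₀ < s₁` and `C_ε > 0` with
`K(x) f(t) t ≤ ε (V(x)t² + t^{2*_s}) + C_ε K(x) χ_{[s₀,s₁]}(t) t^q` for all `t ≥ 0`. -/
theorem stmt_3 (N : ℕ) (hN : 0 < N) (s : ℝ) (hs0 : 0 < s) (hs2 : s < 2)
    (hsN : s < (N : ℝ)) (q : ℝ) (hq2 : 2 < q) (hqc : q < 2 * N / (N - s))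
    (V K : EuclideanSpace ℝ (Fin N) → ℝ)
    (hVcont : Continuous V) (hKcont : Continuous K)
    (hVpos : ∀ x, 0 < V x) (hKpos : ∀ x, 0 < K x)
    (hKbdd : ∃ C : ℝ, ∀ x, K x ≤ C)
    (hKVbdd : ∃ C : ℝ, ∀ x, K x / V x ≤ C)
    (f : ℝ → ℝ) (hfcont : Continuous f) (hfnonneg : ∀ t, 0 ≤ f t)
    (hfneg : ∀ t ≤ (0 : ℝ), f t = 0)
    (hf0 : Tendsto (fun t => f t / t) (nhdsWithin 0 (Set.Ioi 0)) (nhds 0))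
    (hfinfty : Tendsto (fun t => f t / t ^ (2 * N / (N - s) - 1)) atTop (nhds 0)) :
    ∀ ε > (0 : ℝ), ∃ s₀ s₁ Cε : ℝ, 0 < s₀ ∧ s₀ < s₁ ∧ 0 < Cε ∧
      ∀ x : EuclideanSpace ℝ (Fin N), ∀ t : ℝ, 0 ≤ t →
        K x * f t * t ≤ ε * (V x * t ^ 2 + t ^ (2 * N / (N - s))) +
          Cε * K x * Set.indicator (Set.Icc s₀ s₁) (fun _ => (1 : ℝ)) t * t ^ q :=
  stmt_3_general N s q V K hVpos hKpos hKbdd hKVbdd f hfcont hfnonneg hf0 hfinfty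
end
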